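/- (Bonnet–Myers for oriented hypergraphs) Let H_o be a weighted oriented hypergraph. If a hyperedge h has LLY curvature κ(h) > 0, then L(h) ≤ 2 max_{h'∈H} w_{h'} / κ(h). Moreover, if κ(u,v) ≥ κ > 0 for every hyperedge h and all u ∈ A_h, v ∈ B_h, then diam(H_o) ≤ 2 max_{h'∈H} w_{h'} / κ. -/

import Mathlib

open Finset Filter Topology

variable {V : Type*} [Fintype V] [DecidableEq V]

/-- A finite weighted directed hypergraph: each hyperedge is an ordered pair
`(A_h, B_h)` of nonempty vertex sets, with a positive weight. -/
structure DHyp (V : Type*) [Fintype V] [DecidableEq V] where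
  E : Finset (Finset V × Finset V)
  w : Finset V × Finset V → ℝ
  pos : ∀ h ∈ E, 0 < w h
  nonempA : ∀ h ∈ E, h.1.Nonempty
  nonempB : ∀ h ∈ E, h.2.Nonempty

/-- `γ` is a directed path from `u` to `v`. -/
def IsDipath (G : DHyp V) (γ : List (Finset V × Finset V)) (u v : V) : Prop :=
  γ ≠ [] ∧ (∀ h ∈ γ, h ∈ G.E) ∧
  (∀ h0, γ.head? = some h0 → u ∈ h0.1) ∧
  (∀ hl, γ.getLast? = some hl → v ∈ hl.2) ∧
  List.Chain' (fun a b => (a.2 ∩ b.1).Nonempty) γ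

/-- Weighted quasi-distance. -/
noncomputable def ddist (G : DHyp V) (u v : V) : ℝ :=
  if u = v then 0 else sInf {s | ∃ γ, IsDipath G γ u v ∧ s = (γ.map G.w).sum}

/-- Strong connectivity: every ordered pair of distinct vertices is joined
by a directed path. -/
def StronglyConnected (G : DHyp V) : Prop :=
  ∀ u v : V, u ≠ v → ∃ γ, IsDipath G γ u v

/-- Looplessness: inputs and outputs of each hyperedge are disjoint. -/
def Loopless (G : DHyp V) : Prop := ∀ h ∈ G.E, h.1 ∩ h.2 = ∅

open Classical in
/-- In-neighborhood `Γ^{in}(x)`. -/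
noncomputable def GammaIn (G : DHyp V) (x : V) : Finset V :=
  Finset.univ.filter (fun z => ∃ h ∈ G.E, x ∈ h.2 ∧ z ∈ h.1)

open Classical in
/-- Out-neighborhood `Γ^{out}(x)`. -/
noncomputable def GammaOut (G : DHyp V) (x : V) : Finset V :=
  Finset.univ.filter (fun z => ∃ h ∈ G.E, x ∈ h.1 ∧ z ∈ h.2)

/-- In-degree: number of hyperedges having `x` as an output. -/
def degIn (G : DHyp V) (x : V) : ℕ := (G.E.filter (fun h => x ∈ h.2)).card

/-- Out-degree: number of hyperedges having `x` as an input. -/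
def degOut (G : DHyp V) (x : V) : ℕ := (G.E.filter (fun h => x ∈ h.1)).card

/-- In-measure `μ^α_{x}` of a vertex `x ∈ A_h`, where `n = |A_h|`. -/
noncomputable def muIn (G : DHyp V) (α : ℝ) (n : ℕ) (x z : V) : ℝ :=
  if z = x then α / n
  else if z ∈ GammaIn G x then
    (1 - α) * ∑ h ∈ G.E.filter (fun h => x ∈ h.2 ∧ z ∈ h.1),
      (1 / ((n : ℝ) * h.1.card)) *
        (G.w h / ∑ h' ∈ G.E.filter (fun h'' => x ∈ h''.2), G.w h')
  else 0

/-- Out-measure `μ^α_{y}` of a vertex `y ∈ B_h`, where `m = |B_h|`. -/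
noncomputable def muOut (G : DHyp V) (α : ℝ) (m : ℕ) (y z : V) : ℝ :=
  if z = y then α / m
  else if z ∈ GammaOut G y then
    (1 - α) * ∑ h ∈ G.E.filter (fun h => y ∈ h.1 ∧ z ∈ h.2),
      (1 / ((m : ℝ) * h.2.card)) *
        (G.w h / ∑ h' ∈ G.E.filter (fun h'' => y ∈ h''.1), G.w h')
  else 0

/-- The measure `μ^α_{A_h}`. -/
noncomputable def muA (G : DHyp V) (α : ℝ) (h : Finset V × Finset V) : V → ℝ :=
  fun z => ∑ x ∈ h.1, muIn G α h.1.card x z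

/-- The measure `μ^α_{B_h}`. -/
noncomputable def muB (G : DHyp V) (α : ℝ) (h : Finset V × Finset V) : V → ℝ :=
  fun z => ∑ y ∈ h.2, muOut G α h.2.card y z

/-- `π` is a coupling of `μ` and `ν`. -/
def IsCoupling (μ ν : V → ℝ) (π : V → V → ℝ) : Prop :=
  (∀ u v, 0 ≤ π u v) ∧ (∀ u, ∑ v, π u v = μ u) ∧ (∀ v, ∑ u, π u v = ν v)

/-- The 1-Wasserstein functional associated to a cost `d`. -/
noncomputable def Wd (d : V → V → ℝ) (μ ν : V → ℝ) : ℝ :=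
  sInf {s | ∃ π, IsCoupling μ ν π ∧ s = ∑ u, ∑ v, π u v * d u v}

/-- Length of a directed hyperedge: `L(h) = min_{x∈A_h, y∈B_h} d(x,y)`. -/
noncomputable def Ldi (G : DHyp V) (h : Finset V × Finset V) : ℝ :=
  sInf {s | ∃ x ∈ h.1, ∃ y ∈ h.2, s = ddist G x y}

/-- Ollivier–Ricci curvature `κ_α(h)` of a directed hyperedge. -/
noncomputable def kappaDE (G : DHyp V) (α : ℝ) (h : Finset V × Finset V) : ℝ :=
  1 - Wd (ddist G) (muA G α h) (muB G α h) / Ldi G h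

/-- Single-vertex in-measure `μ^α_{u^{in}}`. -/
noncomputable def muInPt (G : DHyp V) (α : ℝ) (u z : V) : ℝ :=
  if z = u then α
  else if z ∈ GammaIn G u then
    (1 - α) * ∑ h ∈ G.E.filter (fun h => u ∈ h.2 ∧ z ∈ h.1),
      (1 / (h.1.card : ℝ)) * (G.w h / ∑ h' ∈ G.E.filter (fun h'' => u ∈ h''.2), G.w h')
  else 0

/-- Single-vertex out-measure `μ^α_{v^{out}}`. -/
noncomputable def muOutPt (G : DHyp V) (α : ℝ) (v z : V) : ℝ :=
  if z = v then α
  else if z ∈ GammaOut G v then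
    (1 - α) * ∑ h ∈ G.E.filter (fun h => v ∈ h.1 ∧ z ∈ h.2),
      (1 / (h.2.card : ℝ)) * (G.w h / ∑ h' ∈ G.E.filter (fun h'' => v ∈ h''.1), G.w h')
  else 0

/-- Ollivier–Ricci curvature `κ_α(u,v)` between two vertices. -/
noncomputable def kappaDV (G : DHyp V) (α : ℝ) (u v : V) : ℝ :=
  1 - Wd (ddist G) (muInPt G α u) (muOutPt G α v) / ddist G u v

/-- Maximal hyperedge weight. -/
noncomputable def maxWd (G : DHyp V) : ℝ := sSup {x | ∃ h ∈ G.E, x = G.w h}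

/-- Diameter of a directed hypergraph. -/
noncomputable def diamD (G : DHyp V) : ℝ := sSup {s | ∃ u v : V, s = ddist G u v}

/-- An oriented hypergraph: inputs and outputs are disjoint, the reversal of each
hyperedge is a hyperedge, and weights are reversal-symmetric. -/
def Oriented (G : DHyp V) : Prop :=
  ∀ h ∈ G.E, h.1 ∩ h.2 = ∅ ∧ (h.2, h.1) ∈ G.E ∧ G.w (h.2, h.1) = G.w h

/-- `B_H = max_h |B_h|`. -/
def BH (G : DHyp V) : ℕ := G.E.sup (fun h => h.2.card)

/-- `A_H = max_h |A_h|`. -/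
def AH (G : DHyp V) : ℕ := G.E.sup (fun h => h.1.card)

/-!
Testing the Wasserstein distance against a `1`-Lipschitz function `f` gives
`W(μ, ν) ≥ ∑ ν f - ∑ μ f`. The lazy walk from a vertex stays put with probability `α` and
otherwise crosses one hyperedge, which moves `f` by at most `max w`; with `f` the distance to
`A_h` this yields `W(μ^α_{A_h}, μ^α_{B_h}) ≥ L(h) - 2 (1 - α) max w`, that is
`κ_α(h) ≤ 2 (1 - α) max w / L(h)`, and in the limit `κ(h) ≤ 2 max w / L(h)`. The vertex curvature
`κ(u, v)` is the curvature of the pair `({u}, {v})`, so also `κ(u, v) ≤ 2 max w / d(u, v)`.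

For the diameter, the triangle inequality for `W` along a geodesic `u = x₀, …, x_k = v` (at the
intermediate vertices the in- and out-measures agree, the hypergraph being oriented) gives
`κ(u, v) d(u, v) ≥ ∑ κ(x_{i-1}, x_i) d(x_{i-1}, x_i) ≥ κ d(u, v)`, hence
`κ ≤ κ(u, v) ≤ 2 max w / d(u, v)`.
-/

section Paths

variable {G : DHyp V} {γ : List (Finset V × Finset V)} {u v : V}

lemma isDipath_singleton {h : Finset V × Finset V} (hE : h ∈ G.E) (hu : u ∈ h.1)
    (hv : v ∈ h.2) : IsDipath G [h] u v :=
  ⟨List.cons_ne_nil _ _, by simpa using hE, by simpa using hu, by simpa using hv,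
    List.isChain_singleton _⟩

lemma IsDipath.append {γ' : List (Finset V × Finset V)} {y : V} (hγ : IsDipath G γ u y)
    (hγ' : IsDipath G γ' y v) : IsDipath G (γ ++ γ') u v := by
  obtain ⟨hne, hmem, hhd, hlt, hch⟩ := hγ
  obtain ⟨hne', hmem', hhd', hlt', hch'⟩ := hγ'
  refine ⟨by simp [hne], fun h hh => (List.mem_append.1 hh).elim (hmem h) (hmem' h), ?_, ?_, ?_⟩
  · rwa [List.head?_append_of_ne_nil _ hne]
  · rwa [List.getLast?_append_of_ne_nil _ hne']
  · exact List.isChain_append.2 ⟨hch, hch', fun a ha b hb => ⟨y, mem_inter.2 ⟨hlt a ha, hhd' b hb⟩⟩⟩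

lemma IsDipath.of_cons {h : Finset V × Finset V} (hγ : IsDipath G (h :: γ) u v) :
    h ∈ G.E ∧ u ∈ h.1 := ⟨hγ.2.1 h (by simp), hγ.2.2.1 h rfl⟩

lemma IsDipath.of_singleton {h : Finset V × Finset V} (hγ : IsDipath G [h] u v) : v ∈ h.2 :=
  hγ.2.2.2.1 h rfl

lemma IsDipath.tail {h : Finset V × Finset V} (hγ : IsDipath G (h :: γ) u v) (hne : γ ≠ []) :
    ∃ y ∈ h.2, IsDipath G γ y v := by
  obtain ⟨-, hmem, -, hlt, hch⟩ := hγ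
  obtain ⟨h', hh'⟩ := Option.isSome_iff_exists.1 (List.isSome_head?.2 hne)
  obtain ⟨y, hy⟩ := (List.isChain_cons.1 hch).1 h' hh'
  refine ⟨y, (mem_inter.1 hy).1, hne, fun x hx => hmem x (by simp [hx]), ?_, ?_,
    (List.isChain_cons.1 hch).2⟩
  · rintro _ hh; rw [hh'] at hh; cases hh; exact (mem_inter.1 hy).2
  · intro hl hhl
    obtain ⟨a, γ', rfl⟩ := List.exists_cons_of_ne_nil hne
    exact hlt hl (by simpa using hhl)

lemma IsDipath.sum_pos (hγ : IsDipath G γ u v) : 0 < (γ.map G.w).sum :=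
  List.sum_pos _ (List.forall_mem_map.2 fun h hh => G.pos h (hγ.2.1 h hh)) (by simpa using hγ.1)

end Paths

lemma StronglyConnected.exists_mem_snd {G : DHyp V} (hsc : StronglyConnected G) {u v : V}
    (huv : u ≠ v) : ∃ h ∈ G.E, v ∈ h.2 := by
  obtain ⟨γ, hne, hmem, -, hlt, -⟩ := hsc u v huv
  obtain ⟨h, hh⟩ := Option.isSome_iff_exists.1 (List.getLast?_isSome.2 hne)
  exact ⟨h, hmem h (List.mem_of_getLast? hh), hlt h hh⟩

lemma DHyp.exists_pos_le_w (G : DHyp V) : ∃ c > 0, ∀ h ∈ G.E, c ≤ G.w h := by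
  rcases G.E.eq_empty_or_nonempty with hE | hE
  · exact ⟨1, one_pos, by simp [hE]⟩
  · exact ⟨G.E.inf' hE G.w, (lt_inf'_iff hE).2 G.pos, fun h hh => inf'_le _ hh⟩

section Distance

variable {G : DHyp V} {u v : V}

lemma ddist_self (G : DHyp V) (u : V) : ddist G u u = 0 := if_pos rfl

lemma ddist_le_sum {γ : List (Finset V × Finset V)} (hγ : IsDipath G γ u v) :
    ddist G u v ≤ (γ.map G.w).sum := by
  unfold ddist
  split_ifs
  · exact hγ.sum_pos.le
  · exact csInf_le ⟨0, by rintro _ ⟨γ', hγ', rfl⟩; exact hγ'.sum_pos.le⟩ ⟨γ, hγ, rfl⟩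

lemma ddist_le_w {h : Finset V × Finset V} (hE : h ∈ G.E) (hu : u ∈ h.1) (hv : v ∈ h.2) :
    ddist G u v ≤ G.w h := by
  simpa using ddist_le_sum (isDipath_singleton hE hu hv)

/-- Paths of weight at most that of `γ` have at most `weight γ / c` edges, `c` the least edge
weight; so only finitely many compete and the infimum defining `ddist` is attained. -/
lemma exists_geodesic {γ : List (Finset V × Finset V)} (hγ : IsDipath G γ u v) (huv : u ≠ v) :
    ∃ γ', IsDipath G γ' u v ∧ (γ'.map G.w).sum = ddist G u v := by
  obtain ⟨c, hc, hcw⟩ := G.exists_pos_le_w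
  set B := (γ.map G.w).sum
  set S := {γ' | IsDipath G γ' u v ∧ (γ'.map G.w).sum ≤ B}
  have hfin : S.Finite := by
    refine (List.finite_length_le _ ⌊B / c⌋₊).subset fun γ' ⟨hγ', hB⟩ => Nat.le_floor ?_
    have := List.card_nsmul_le_sum (γ'.map G.w) c
      (List.forall_mem_map.2 fun h hh => hcw h (hγ'.2.1 h hh))
    rw [List.length_map, nsmul_eq_mul] at this
    rw [le_div_iff₀ hc]
    linarith
  obtain ⟨γ₀, ⟨hγ₀, hB⟩, hmin⟩ :=
    Set.exists_min_image S (fun γ' => (γ'.map G.w).sum) hfin ⟨γ, hγ, le_rfl⟩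
  refine ⟨γ₀, hγ₀, ?_⟩
  rw [ddist, if_neg huv]
  refine (IsLeast.csInf_eq ?_).symm
  refine ⟨⟨γ₀, hγ₀, rfl⟩, ?_⟩
  rintro _ ⟨γ', hγ', rfl⟩
  by_cases h : (γ'.map G.w).sum ≤ B
  · exact hmin γ' ⟨hγ', h⟩
  · linarith

lemma ddist_nonneg (G : DHyp V) (u v : V) : 0 ≤ ddist G u v := by
  unfold ddist
  split_ifs
  · exact le_rfl
  · exact Real.sInf_nonneg (by rintro _ ⟨γ, hγ, rfl⟩; exact hγ.sum_pos.le)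

variable (hsc : StronglyConnected G)
include hsc

lemma ddist_pos (huv : u ≠ v) : 0 < ddist G u v := by
  obtain ⟨γ, hγ, hsum⟩ := exists_geodesic (hsc u v huv).choose_spec huv
  exact hsum ▸ hγ.sum_pos

lemma ddist_triangle (u y v : V) : ddist G u v ≤ ddist G u y + ddist G y v := by
  rcases eq_or_ne u y with rfl | huy
  · simp [ddist_self]
  rcases eq_or_ne y v with rfl | hyv
  · simp [ddist_self]
  obtain ⟨γ, hγ, hsum⟩ := exists_geodesic (hsc u y huy).choose_spec huy
  obtain ⟨γ', hγ', hsum'⟩ := exists_geodesic (hsc y v hyv).choose_spec hyv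
  simpa [hsum, hsum'] using ddist_le_sum (hγ.append hγ')

end Distance

lemma w_le_maxWd {G : DHyp V} {h : Finset V × Finset V} (hE : h ∈ G.E) : G.w h ≤ maxWd G :=
  le_csSup ((G.E.finite_toSet.image G.w).subset
    (by rintro _ ⟨h, hh, rfl⟩; exact ⟨h, hh, rfl⟩)).bddAbove ⟨h, hE, rfl⟩

lemma maxWd_nonneg (G : DHyp V) : 0 ≤ maxWd G :=
  Real.sSup_nonneg (by rintro _ ⟨h, hE, rfl⟩; exact (G.pos h hE).le)

section Wasserstein

variable {X : Type*} [Fintype X] {d : X → X → ℝ} {μ ρ ν : X → ℝ} {π π' : X → X → ℝ}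

lemma Wd_le_cost (hd : ∀ a b, 0 ≤ d a b) (hπ : IsCoupling μ ν π) :
    Wd d μ ν ≤ ∑ a, ∑ b, π a b * d a b :=
  csInf_le ⟨0, by
    rintro _ ⟨π, hπ, rfl⟩
    exact sum_nonneg fun a _ => sum_nonneg fun b _ => mul_nonneg (hπ.1 a b) (hd a b)⟩
    ⟨π, hπ, rfl⟩

lemma le_Wd {B : ℝ} (hπ : IsCoupling μ ν π)
    (h : ∀ π, IsCoupling μ ν π → B ≤ ∑ a, ∑ b, π a b * d a b) : B ≤ Wd d μ ν :=
  le_csInf ⟨_, π, hπ, rfl⟩ (by rintro _ ⟨π, hπ, rfl⟩; exact h π hπ)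

lemma isCoupling_mul (hμ : μ ∈ stdSimplex ℝ X) (hν : ν ∈ stdSimplex ℝ X) :
    IsCoupling μ ν fun a b => μ a * ν b :=
  ⟨fun a b => mul_nonneg (hμ.1 a) (hν.1 b), fun a => by rw [← mul_sum, hν.2, mul_one],
    fun b => by rw [← sum_mul, hμ.2, one_mul]⟩

/-- Kantorovich duality, the easy direction. -/
lemma sub_le_Wd {f : X → ℝ} (hf : ∀ a b, f b - f a ≤ d a b) (hπ : IsCoupling μ ν π) :
    ∑ z, ν z * f z - ∑ z, μ z * f z ≤ Wd d μ ν := by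
  refine le_Wd hπ fun π hπ => ?_
  calc ∑ z, ν z * f z - ∑ z, μ z * f z = ∑ a, ∑ b, π a b * (f b - f a) := by
        simp only [← hπ.2.1, ← hπ.2.2, sum_mul, mul_sub, sum_sub_distrib]
        rw [sum_comm]
    _ ≤ ∑ a, ∑ b, π a b * d a b :=
        sum_le_sum fun a _ => sum_le_sum fun b _ => mul_le_mul_of_nonneg_left (hf a b) (hπ.1 a b)

lemma IsCoupling.eq_zero_of_left (hπ : IsCoupling μ ν π) {a : X} (ha : μ a = 0) (b : X) :
    π a b = 0 :=
  (sum_eq_zero_iff_of_nonneg fun b _ => hπ.1 a b).1 ((hπ.2.1 a).trans ha) b (mem_univ b)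

lemma IsCoupling.eq_zero_of_right (hπ : IsCoupling μ ν π) {b : X} (hb : ν b = 0) (a : X) :
    π a b = 0 :=
  (sum_eq_zero_iff_of_nonneg fun a _ => hπ.1 a b).1 ((hπ.2.2 b).trans hb) a (mem_univ a)

/-- Gluing of two couplings along their common marginal `ρ`. -/
lemma IsCoupling.glue (hπ : IsCoupling μ ρ π) (hπ' : IsCoupling ρ ν π') :
    IsCoupling μ ν (fun a b => ∑ x, π a x / ρ x * π' x b) := by
  have hρ : ∀ x, 0 ≤ ρ x := fun x => hπ.2.2 x ▸ sum_nonneg fun a _ => hπ.1 a x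
  refine ⟨fun a b => sum_nonneg fun x _ => mul_nonneg (div_nonneg (hπ.1 a x) (hρ x)) (hπ'.1 x b),
    fun a => ?_, fun b => ?_⟩
  · rw [sum_comm, ← hπ.2.1 a]
    refine sum_congr rfl fun x _ => ?_
    rw [← mul_sum, hπ'.2.1 x, div_mul_cancel_of_imp fun hx => hπ.eq_zero_of_right hx a]
  · rw [sum_comm, ← hπ'.2.2 b]
    refine sum_congr rfl fun x _ => ?_
    rw [← sum_mul, ← sum_div, hπ.2.2 x, div_mul_eq_mul_div,
      mul_div_cancel_left_of_imp fun hx => hπ'.eq_zero_of_left hx b]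

lemma IsCoupling.glue_cost_le (hd : ∀ a b c, d a c ≤ d a b + d b c) (hπ : IsCoupling μ ρ π)
    (hπ' : IsCoupling ρ ν π') :
    ∑ a, ∑ b, (∑ x, π a x / ρ x * π' x b) * d a b
      ≤ ∑ a, ∑ b, π a b * d a b + ∑ a, ∑ b, π' a b * d a b := by
  have hρ : ∀ x, 0 ≤ ρ x := fun x => hπ.2.2 x ▸ sum_nonneg fun a _ => hπ.1 a x
  calc ∑ a, ∑ b, (∑ x, π a x / ρ x * π' x b) * d a b
      ≤ ∑ a, ∑ b, ∑ x, π a x / ρ x * π' x b * (d a x + d x b) := by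
        refine sum_le_sum fun a _ => sum_le_sum fun b _ => ?_
        rw [sum_mul]
        exact sum_le_sum fun x _ => mul_le_mul_of_nonneg_left (hd a x b)
          (mul_nonneg (div_nonneg (hπ.1 a x) (hρ x)) (hπ'.1 x b))
    _ = ∑ a, ∑ x, π a x / ρ x * (∑ b, π' x b) * d a x
          + ∑ x, ∑ b, (∑ a, π a x) / ρ x * π' x b * d x b := by
        simp only [mul_add, sum_add_distrib, sum_mul, mul_sum, sum_div]
        congr 1
        · exact sum_congr rfl fun a _ => sum_comm
        · exact (sum_comm.trans (sum_congr rfl fun b _ => sum_comm)).trans sum_comm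
    _ = ∑ a, ∑ b, π a b * d a b + ∑ a, ∑ b, π' a b * d a b := by
        simp only [hπ'.2.1, hπ.2.2]
        congr 1
        · refine sum_congr rfl fun a _ => sum_congr rfl fun x _ => ?_
          rw [div_mul_cancel_of_imp fun hx => hπ.eq_zero_of_right hx a]
        · refine sum_congr rfl fun x _ => sum_congr rfl fun b _ => ?_
          rw [div_mul_eq_mul_div, mul_div_cancel_left_of_imp fun hx => hπ'.eq_zero_of_left hx b]

lemma Wd_triangle (hd₀ : ∀ a b, 0 ≤ d a b) (hd : ∀ a b c, d a c ≤ d a b + d b c)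
    (hπ : IsCoupling μ ρ π) (hπ' : IsCoupling ρ ν π') : Wd d μ ν ≤ Wd d μ ρ + Wd d ρ ν := by
  have h : ∀ σ, IsCoupling μ ρ σ → Wd d μ ν - ∑ a, ∑ b, σ a b * d a b ≤ Wd d ρ ν :=
    fun σ hσ => le_Wd hπ' fun σ' hσ' => by
      linarith [Wd_le_cost hd₀ (hσ.glue hσ'), hσ.glue_cost_le hd hσ']
  linarith [le_Wd hπ fun σ hσ => (by linarith [h σ hσ] : Wd d μ ν - Wd d ρ ν ≤ _)]

end Wasserstein

lemma abs_sum_mul_sub_le {ι : Type*} {s : Finset ι} {p x : ι → ℝ} {c M : ℝ}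
    (hp : ∀ i ∈ s, 0 ≤ p i) (hp₁ : ∑ i ∈ s, p i = 1) (hx : ∀ i ∈ s, |x i - c| ≤ M) :
    |∑ i ∈ s, p i * x i - c| ≤ M :=
  calc |∑ i ∈ s, p i * x i - c| = |∑ i ∈ s, p i * (x i - c)| := by
        simp only [mul_sub, sum_sub_distrib, ← sum_mul, hp₁, one_mul]
    _ ≤ ∑ i ∈ s, p i * M := by
        refine (abs_sum_le_sum_abs _ _).trans (sum_le_sum fun i hi => ?_)
        rw [abs_mul, abs_of_nonneg (hp i hi)]
        exact mul_le_mul_of_nonneg_left (hx i hi) (hp i hi)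
    _ = M := by rw [← sum_mul, hp₁, one_mul]

lemma Oriented.loopless {G : DHyp V} (hor : Oriented G) : Loopless G := fun h hE => (hor h hE).1

lemma Loopless.disjoint {G : DHyp V} (hl : Loopless G) {h : Finset V × Finset V}
    (hE : h ∈ G.E) : Disjoint h.1 h.2 :=
  disjoint_iff_inter_eq_empty.2 (hl h hE)

/-- The normalising constant of `muInPt G α u`. -/
noncomputable def inWeight (G : DHyp V) (u : V) : ℝ :=
  ∑ h ∈ G.E.filter (fun h => u ∈ h.2), G.w h

section Measures

variable {G : DHyp V} {α : ℝ} {u : V}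

lemma inWeight_pos (hu : ∃ h ∈ G.E, u ∈ h.2) : 0 < inWeight G u := by
  obtain ⟨h, hE, hu⟩ := hu
  exact sum_pos (fun h hh => G.pos h (mem_filter.1 hh).1) ⟨h, mem_filter.2 ⟨hE, hu⟩⟩

lemma sum_muInPt_mul (hl : Loopless G) (f : V → ℝ) :
    ∑ z, muInPt G α u z * f z = α * f u + (1 - α) * ∑ h ∈ G.E.filter (fun h => u ∈ h.2),
      G.w h / inWeight G u * ∑ z ∈ h.1, (h.1.card : ℝ)⁻¹ * f z := by
  have hpt : ∀ z, muInPt G α u z = (if z = u then α else 0) + (1 - α) *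
      ∑ h ∈ G.E.filter (fun h => u ∈ h.2 ∧ z ∈ h.1),
        1 / (h.1.card : ℝ) * (G.w h / inWeight G u) := by
    intro z
    have hempty : G.E.filter (fun h => u ∈ h.2 ∧ z ∈ h.1) = ∅ ↔ z ∉ GammaIn G u := by
      simp [GammaIn, filter_eq_empty_iff]
    unfold muInPt
    split_ifs with hzu hz
    · subst hzu
      rw [(hempty.2 fun hz => ?_), sum_empty, mul_zero, add_zero]
      rw [GammaIn, mem_filter] at hz
      obtain ⟨-, h, hE, hu₂, hu₁⟩ := hz
      simpa [hl h hE] using mem_inter.2 ⟨hu₁, hu₂⟩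
    · rw [zero_add]; rfl
    · rw [hempty.2 hz, sum_empty, mul_zero, add_zero]
  simp only [hpt, add_mul, sum_add_distrib, ite_mul, zero_mul, sum_ite_eq', mem_univ, if_true,
    mul_assoc, ← mul_sum, sum_mul]
  congr 2
  rw [sum_comm' (t' := G.E.filter (fun h => u ∈ h.2)) (s' := fun h => h.1)]
  · refine sum_congr rfl fun h _ => ?_
    simp only [mul_sum]
    exact sum_congr rfl fun z _ => by ring
  · intro z h
    simp only [mem_univ, mem_filter, true_and]
    tauto

lemma abs_sum_muInPt_mul_sub_le (hl : Loopless G) (hα : α ∈ Set.Icc (0 : ℝ) 1)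
    (hu : ∃ h ∈ G.E, u ∈ h.2) {f : V → ℝ} {M : ℝ}
    (hf : ∀ h ∈ G.E, u ∈ h.2 → ∀ z ∈ h.1, |f z - f u| ≤ M) :
    |∑ z, muInPt G α u z * f z - f u| ≤ (1 - α) * M := by
  have hD := inWeight_pos hu
  have hmean : |∑ h ∈ G.E.filter (fun h => u ∈ h.2),
      G.w h / inWeight G u * ∑ z ∈ h.1, (h.1.card : ℝ)⁻¹ * f z - f u| ≤ M := by
    refine abs_sum_mul_sub_le (fun h hh => (div_pos (G.pos h (mem_filter.1 hh).1) hD).le)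
      (by rw [← sum_div]; exact div_self hD.ne') fun h hh => ?_
    obtain ⟨hE, hu⟩ := mem_filter.1 hh
    refine abs_sum_mul_sub_le (fun _ _ => by positivity) ?_ (hf h hE hu)
    rw [sum_const, nsmul_eq_mul, mul_inv_cancel₀ (Nat.cast_ne_zero.2 (G.nonempA h hE).card_ne_zero)]
  rw [sum_muInPt_mul hl, show ∀ X, α * f u + (1 - α) * X - f u = (1 - α) * (X - f u) by
    intro X; ring, abs_mul, abs_of_nonneg (sub_nonneg.2 hα.2)]
  exact mul_le_mul_of_nonneg_left hmean (sub_nonneg.2 hα.2)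

lemma muInPt_mem_stdSimplex (hl : Loopless G) (hα : α ∈ Set.Icc (0 : ℝ) 1)
    (hu : ∃ h ∈ G.E, u ∈ h.2) : muInPt G α u ∈ stdSimplex ℝ V := by
  refine ⟨fun z => ?_, ?_⟩
  · unfold muInPt
    split_ifs
    · exact hα.1
    · refine mul_nonneg (sub_nonneg.2 hα.2) (sum_nonneg fun h hh => ?_)
      exact mul_nonneg (by positivity) (div_nonneg (G.pos h (mem_filter.1 hh).1).le
        (sum_nonneg fun h hh => (G.pos h (mem_filter.1 hh).1).le))
    · exact le_rfl
  · -- the mass is the mean of the constant function `1`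
    have := abs_sum_muInPt_mul_sub_le hl hα hu (f := 1) (M := 0) (by simp)
    simpa [sub_eq_zero] using this

end Measures

section Reversal

variable {G : DHyp V} (hor : Oriented G)
include hor

lemma Oriented.sum_filter_swap (p : Finset V → Finset V → Prop) [∀ a b, Decidable (p a b)]
    (F : Finset V → Finset V → ℝ → ℝ) :
    ∑ h ∈ G.E.filter (fun h => p h.1 h.2), F h.1 h.2 (G.w h)
      = ∑ h ∈ G.E.filter (fun h => p h.2 h.1), F h.2 h.1 (G.w h) := by
  refine sum_nbij' Prod.swap Prod.swap (fun h hh => ?_) (fun h hh => ?_) (fun _ _ => rfl)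
    (fun _ _ => rfl) (fun h hh => ?_)
  · obtain ⟨hE, hp⟩ := mem_filter.1 hh
    exact mem_filter.2 ⟨(hor h hE).2.1, hp⟩
  · obtain ⟨hE, hp⟩ := mem_filter.1 hh
    exact mem_filter.2 ⟨(hor h hE).2.1, hp⟩
  · simp only [Prod.swap, (hor h (mem_filter.1 hh).1).2.2]

lemma Oriented.gammaIn_eq_gammaOut (x : V) : GammaIn G x = GammaOut G x := by
  ext z
  simp only [GammaIn, GammaOut, mem_filter, mem_univ, true_and]
  exact ⟨fun ⟨h, hE, hx, hz⟩ => ⟨h.swap, (hor h hE).2.1, hx, hz⟩,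
    fun ⟨h, hE, hx, hz⟩ => ⟨h.swap, (hor h hE).2.1, hx, hz⟩⟩

lemma Oriented.muOutPt_eq_muInPt (α : ℝ) (x : V) : muOutPt G α x = muInPt G α x := by
  funext z
  unfold muOutPt muInPt
  rw [hor.gammaIn_eq_gammaOut,
    hor.sum_filter_swap (fun _ b => x ∈ b) (fun _ _ t => t),
    hor.sum_filter_swap (fun a b => x ∈ b ∧ z ∈ a) (fun a _ t => 1 / (a.card : ℝ) * (t / _))]

end Reversal

section Averages

variable (G : DHyp V) (α : ℝ)

lemma muIn_eq_div (n : ℕ) (x z : V) : muIn G α n x z = muInPt G α x z / n := by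
  unfold muIn muInPt
  split_ifs
  · rfl
  · rw [mul_div_assoc, sum_div]
    congr 1
    exact sum_congr rfl fun h _ => by ring
  · rw [zero_div]

lemma muOut_eq_div (m : ℕ) (y z : V) : muOut G α m y z = muOutPt G α y z / m := by
  unfold muOut muOutPt
  split_ifs
  · rfl
  · rw [mul_div_assoc, sum_div]
    congr 1
    exact sum_congr rfl fun h _ => by ring
  · rw [zero_div]

lemma muA_eq (h : Finset V × Finset V) :
    muA G α h = ∑ x ∈ h.1, (h.1.card : ℝ)⁻¹ • muInPt G α x := by
  funext z
  simp [muA, muIn_eq_div, div_eq_inv_mul]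

lemma muB_eq (h : Finset V × Finset V) :
    muB G α h = ∑ y ∈ h.2, (h.2.card : ℝ)⁻¹ • muOutPt G α y := by
  funext z
  simp [muB, muOut_eq_div, div_eq_inv_mul]

end Averages

lemma sum_smul_apply_mul {ι X : Type*} [Fintype X] (s : Finset ι) (c : ι → ℝ) (μ : ι → X → ℝ)
    (f : X → ℝ) : ∑ z, (∑ i ∈ s, c i • μ i) z * f z = ∑ i ∈ s, c i * ∑ z, μ i z * f z := by
  simp only [Finset.sum_apply, Pi.smul_apply, smul_eq_mul, sum_mul, mul_sum, mul_assoc]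
  exact sum_comm

lemma average_mem_stdSimplex {ι X : Type*} [Fintype X] {s : Finset ι} (hs : s.Nonempty)
    {μ : ι → X → ℝ} (hμ : ∀ i ∈ s, μ i ∈ stdSimplex ℝ X) :
    ∑ i ∈ s, (s.card : ℝ)⁻¹ • μ i ∈ stdSimplex ℝ X :=
  (convex_stdSimplex ℝ X).sum_mem (fun _ _ => by positivity)
    (by rw [sum_const, nsmul_eq_mul, mul_inv_cancel₀ (Nat.cast_ne_zero.2 hs.card_ne_zero)]) hμ

section Ldi

variable {G : DHyp V} {h : Finset V × Finset V}

lemma Ldi_le {x y : V} (hx : x ∈ h.1) (hy : y ∈ h.2) : Ldi G h ≤ ddist G x y :=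
  csInf_le ⟨0, by rintro _ ⟨x, -, y, -, rfl⟩; exact ddist_nonneg G x y⟩ ⟨x, hx, y, hy, rfl⟩

lemma exists_Ldi_eq (hA : h.1.Nonempty) (hB : h.2.Nonempty) :
    ∃ x ∈ h.1, ∃ y ∈ h.2, Ldi G h = ddist G x y := by
  obtain ⟨x, hx⟩ := hA
  obtain ⟨y, hy⟩ := hB
  have hne : {s | ∃ x ∈ h.1, ∃ y ∈ h.2, s = ddist G x y}.Nonempty := ⟨_, x, hx, y, hy, rfl⟩
  refine hne.csInf_mem ?_
  exact ((h.1 ×ˢ h.2).finite_toSet.image fun p => ddist G p.1 p.2).subset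
    (by rintro _ ⟨x, hx, y, hy, rfl⟩; exact ⟨(x, y), mem_product.2 ⟨hx, hy⟩, rfl⟩)

lemma Ldi_pos (hsc : StronglyConnected G) (hA : h.1.Nonempty) (hB : h.2.Nonempty)
    (hdisj : Disjoint h.1 h.2) : 0 < Ldi G h := by
  obtain ⟨x, hx, y, hy, hL⟩ := exists_Ldi_eq (G := G) hA hB
  exact hL ▸ ddist_pos hsc (disjoint_left.1 hdisj hx ∘ (· ▸ hy))

lemma Ldi_singleton (u v : V) : Ldi G ({u}, {v}) = ddist G u v := by
  simp [Ldi]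

/-- The distance to `A_h`. -/
lemma exists_lipschitz_zero_on_fst_ge_Ldi_on_snd (hsc : StronglyConnected G)
    (hA : h.1.Nonempty) :
    ∃ f : V → ℝ, (∀ a b, f b - f a ≤ ddist G a b) ∧ (∀ x ∈ h.1, f x = 0) ∧
      ∀ y ∈ h.2, Ldi G h ≤ f y := by
  refine ⟨fun z => h.1.inf' hA fun x => ddist G x z, fun a b => ?_, fun x hx => ?_,
    fun y hy => le_inf' _ _ fun x hx => Ldi_le hx hy⟩
  · obtain ⟨x, hx, hfa⟩ := exists_mem_eq_inf' hA fun x => ddist G x a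
    have := inf'_le (fun x => ddist G x b) hx
    have := ddist_triangle hsc x a b
    simp only at *
    linarith
  · exact le_antisymm ((inf'_le _ hx).trans_eq (ddist_self G x))
      (le_inf' _ _ fun y _ => ddist_nonneg G y x)

end Ldi

section UpperBound

variable {G : DHyp V} {α : ℝ} (hor : Oriented G) (hsc : StronglyConnected G)
include hor

lemma Oriented.muB_eq_muInPt (h : Finset V × Finset V) :
    muB G α h = ∑ y ∈ h.2, (h.2.card : ℝ)⁻¹ • muInPt G α y := by
  simp only [muB_eq, hor.muOutPt_eq_muInPt]

/-- Each step of the walk moves along a hyperedge, hence changes a `1`-Lipschitz function by at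
most `maxWd G`. -/
lemma Oriented.abs_sum_muInPt_mul_sub_le_of_lipschitz (hα : α ∈ Set.Icc (0 : ℝ) 1) {u : V}
    (hu : ∃ h ∈ G.E, u ∈ h.2) {f : V → ℝ} (hf : ∀ a b, f b - f a ≤ ddist G a b) :
    |∑ z, muInPt G α u z * f z - f u| ≤ (1 - α) * maxWd G := by
  refine abs_sum_muInPt_mul_sub_le hor.loopless hα hu fun h hE hu z hz => abs_sub_le_iff.2 ⟨?_, ?_⟩
  · calc f z - f u ≤ ddist G u z := hf u z
      _ ≤ G.w (h.2, h.1) := ddist_le_w (hor h hE).2.1 hu hz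
      _ ≤ maxWd G := (hor h hE).2.2 ▸ w_le_maxWd hE
  · calc f u - f z ≤ ddist G z u := hf z u
      _ ≤ G.w h := ddist_le_w hE hz hu
      _ ≤ maxWd G := w_le_maxWd hE

include hsc

lemma Wd_muA_muB_ge {h : Finset V × Finset V} (hA : h.1.Nonempty) (hB : h.2.Nonempty)
    (hAin : ∀ x ∈ h.1, ∃ h' ∈ G.E, x ∈ h'.2) (hBin : ∀ y ∈ h.2, ∃ h' ∈ G.E, y ∈ h'.2)
    (hα : α ∈ Set.Icc (0 : ℝ) 1) :
    Ldi G h - 2 * (1 - α) * maxWd G ≤ Wd (ddist G) (muA G α h) (muB G α h) := by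
  obtain ⟨f, hlip, hfA, hfB⟩ := exists_lipschitz_zero_on_fst_ge_Ldi_on_snd hsc hA
  have hmeanA : ∑ z, muA G α h z * f z ≤ (1 - α) * maxWd G := by
    rw [muA_eq, sum_smul_apply_mul]
    refine (le_abs_self _).trans ?_
    simpa using abs_sum_mul_sub_le (c := 0) (fun _ _ => by positivity)
      (by rw [sum_const, nsmul_eq_mul, mul_inv_cancel₀ (Nat.cast_ne_zero.2 hA.card_ne_zero)])
      fun x hx => by
        simpa [hfA x hx] using hor.abs_sum_muInPt_mul_sub_le_of_lipschitz hα (hAin x hx) hlip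
  have hmeanB : Ldi G h - (1 - α) * maxWd G ≤ ∑ z, muB G α h z * f z := by
    rw [hor.muB_eq_muInPt, sum_smul_apply_mul]
    calc Ldi G h - (1 - α) * maxWd G
        = ∑ y ∈ h.2, (h.2.card : ℝ)⁻¹ * (Ldi G h - (1 - α) * maxWd G) := by
          rw [← mul_sum, sum_const, nsmul_eq_mul, ← mul_assoc,
            inv_mul_cancel₀ (Nat.cast_ne_zero.2 hB.card_ne_zero), one_mul]
      _ ≤ _ := sum_le_sum fun y hy => mul_le_mul_of_nonneg_left (by
          linarith [hfB y hy, neg_abs_le (∑ z, muInPt G α y z * f z - f y),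
            hor.abs_sum_muInPt_mul_sub_le_of_lipschitz hα (hBin y hy) hlip]) (by positivity)
  have hμA : muA G α h ∈ stdSimplex ℝ V := by
    rw [muA_eq]
    exact average_mem_stdSimplex hA fun x hx => muInPt_mem_stdSimplex hor.loopless hα (hAin x hx)
  have hμB : muB G α h ∈ stdSimplex ℝ V := by
    rw [hor.muB_eq_muInPt]
    exact average_mem_stdSimplex hB fun y hy => muInPt_mem_stdSimplex hor.loopless hα (hBin y hy)
  linarith [sub_le_Wd hlip (isCoupling_mul hμA hμB)]

lemma kappaDE_le {h : Finset V × Finset V} (hA : h.1.Nonempty) (hB : h.2.Nonempty)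
    (hAin : ∀ x ∈ h.1, ∃ h' ∈ G.E, x ∈ h'.2) (hBin : ∀ y ∈ h.2, ∃ h' ∈ G.E, y ∈ h'.2)
    (hL : 0 < Ldi G h) (hα : α ∈ Set.Icc (0 : ℝ) 1) :
    kappaDE G α h ≤ (1 - α) * (2 * maxWd G / Ldi G h) :=
  calc kappaDE G α h ≤ 1 - (Ldi G h - 2 * (1 - α) * maxWd G) / Ldi G h := by
        unfold kappaDE
        gcongr
        exact Wd_muA_muB_ge hor hsc hA hB hAin hBin hα
    _ = (1 - α) * (2 * maxWd G / Ldi G h) := by field_simp; ring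

end UpperBound

instance : (𝓝[Set.Ico (0 : ℝ) 1] 1).NeBot := right_nhdsWithin_Ico_neBot zero_lt_one

lemma le_of_tendsto_div_one_sub {f : ℝ → ℝ} {C K : ℝ}
    (hf : ∀ α ∈ Set.Ico (0 : ℝ) 1, f α ≤ (1 - α) * C)
    (hK : Tendsto (fun α => f α / (1 - α)) (𝓝[Set.Ico 0 1] 1) (𝓝 K)) : K ≤ C :=
  le_of_tendsto hK <| eventually_nhdsWithin_of_forall fun α hα => by
    rw [div_le_iff₀ (sub_pos.2 hα.2), mul_comm]
    exact hf α hα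

lemma kappaDV_eq_kappaDE (G : DHyp V) (α : ℝ) (u v : V) :
    kappaDV G α u v = kappaDE G α ({u}, {v}) := by
  simp [kappaDV, kappaDE, muA_eq, muB_eq, Ldi_singleton]

lemma kappaDV_mul_ddist {G : DHyp V} {α : ℝ} {u v : V} (hd : ddist G u v ≠ 0) :
    kappaDV G α u v * ddist G u v
      = ddist G u v - Wd (ddist G) (muInPt G α u) (muOutPt G α v) := by
  unfold kappaDV
  field_simp

section Curvature

variable {G : DHyp V} (hor : Oriented G) (hsc : StronglyConnected G) {K : V → V → ℝ}
  (hK : ∀ u v : V, u ≠ v →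
    Tendsto (fun α => kappaDV G α u v / (1 - α)) (𝓝[Set.Ico (0 : ℝ) 1] 1) (𝓝 (K u v)))
include hor hsc

lemma kappaDV_le {α : ℝ} {u v : V} (huv : u ≠ v) (hα : α ∈ Set.Icc (0 : ℝ) 1) :
    kappaDV G α u v ≤ (1 - α) * (2 * maxWd G / ddist G u v) := by
  have hL : 0 < Ldi G ({u}, {v}) := Ldi_singleton (G := G) u v ▸ ddist_pos hsc huv
  simpa only [kappaDV_eq_kappaDE, Ldi_singleton] using
    kappaDE_le hor hsc (singleton_nonempty u) (singleton_nonempty v)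
      (by simpa using hsc.exists_mem_snd huv.symm) (by simpa using hsc.exists_mem_snd huv) hL hα

include hK

/-- The Wasserstein triangle inequality through `y`, passed to the limit `α → 1`. -/
lemma K_mul_ddist_add_le {u y v : V} (huy : u ≠ y) (hyv : y ≠ v) (huv : u ≠ v)
    (hd : ddist G u v = ddist G u y + ddist G y v) :
    K u y * ddist G u y + K y v * ddist G y v ≤ K u v * ddist G u v := by
  have key : ∀ α ∈ Set.Ico (0 : ℝ) 1,
      kappaDV G α u y / (1 - α) * ddist G u y + kappaDV G α y v / (1 - α) * ddist G y v
        ≤ kappaDV G α u v / (1 - α) * ddist G u v := by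
    intro α hα
    have hmem : ∀ x x' : V, x ≠ x' → muInPt G α x ∈ stdSimplex ℝ V := fun x x' hx =>
      muInPt_mem_stdSimplex hor.loopless (Set.Ico_subset_Icc_self hα) (hsc.exists_mem_snd hx.symm)
    have hW : Wd (ddist G) (muInPt G α u) (muOutPt G α v)
        ≤ Wd (ddist G) (muInPt G α u) (muOutPt G α y)
          + Wd (ddist G) (muInPt G α y) (muOutPt G α v) := by
      simp only [hor.muOutPt_eq_muInPt]
      exact Wd_triangle (ddist_nonneg G) (ddist_triangle hsc)
        (isCoupling_mul (hmem u y huy) (hmem y u huy.symm))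
        (isCoupling_mul (hmem y u huy.symm) (hmem v u huv.symm))
    simp only [div_mul_eq_mul_div, kappaDV_mul_ddist (ddist_pos hsc huy).ne',
      kappaDV_mul_ddist (ddist_pos hsc hyv).ne', kappaDV_mul_ddist (ddist_pos hsc huv).ne',
      ← add_div]
    exact div_le_div_of_nonneg_right (by linarith) (sub_nonneg.2 hα.2.le)
  exact le_of_tendsto_of_tendsto (((hK u y huy).mul_const _).add ((hK y v hyv).mul_const _))
    ((hK u v huv).mul_const _) (eventually_nhdsWithin_of_forall key)

variable {κ : ℝ} (hedge : ∀ h ∈ G.E, ∀ u ∈ h.1, ∀ v ∈ h.2, κ ≤ K u v)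
include hedge

lemma mul_ddist_le_K_mul_ddist {γ : List (Finset V × Finset V)} {u v : V}
    (hγ : IsDipath G γ u v) (hgeo : (γ.map G.w).sum = ddist G u v) :
    κ * ddist G u v ≤ K u v * ddist G u v := by
  induction γ generalizing u with
  | nil => exact absurd rfl hγ.1
  | cons h t ih =>
    obtain ⟨hE, hu⟩ := hγ.of_cons
    have hstep : ∀ y ∈ h.2, κ * ddist G u y ≤ K u y * ddist G u y := fun y hy =>
      mul_le_mul_of_nonneg_right (hedge h hE u hu y hy) (ddist_nonneg G u y)
    rcases eq_or_ne t [] with rfl | ht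
    · exact hstep v hγ.of_singleton
    obtain ⟨y, hy, hγt⟩ := hγ.tail ht
    rcases eq_or_ne y v with rfl | hyv
    · exact hstep y hy
    rcases eq_or_ne u v with rfl | huv
    · simp [ddist_self]
    have huy : u ≠ y := fun huy => disjoint_left.1 (hor.loopless.disjoint hE) hu (huy ▸ hy)
    rw [List.map_cons, List.sum_cons] at hgeo
    have := ddist_le_w hE hu hy
    have := ddist_le_sum hγt
    have := ddist_triangle hsc u y v
    have hsplit : ddist G u v = ddist G u y + ddist G y v := by linarith
    have hκ : κ * ddist G u v = κ * ddist G u y + κ * ddist G y v := by rw [hsplit, mul_add]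
    linarith [ih hγt (by linarith), hstep y hy, K_mul_ddist_add_le hor hsc hK huy hyv huv hsplit]

lemma le_K {u v : V} (huv : u ≠ v) : κ ≤ K u v := by
  obtain ⟨γ, hγ, hgeo⟩ := exists_geodesic (hsc u v huv).choose_spec huv
  exact le_of_mul_le_mul_right (mul_ddist_le_K_mul_ddist hor hsc hK hedge hγ hgeo)
    (ddist_pos hsc huv)

end Curvature

/-- Bonnet–Myers for oriented hypergraphs. -/
theorem stmt13 (G : DHyp V) (hor : Oriented G) (hsc : StronglyConnected G)
    (K : V → V → ℝ)
    (hK : ∀ u v : V, u ≠ v →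
      Tendsto (fun α => kappaDV G α u v / (1 - α)) (nhdsWithin 1 (Set.Ico (0:ℝ) 1))
        (nhds (K u v))) :
    (∀ h ∈ G.E, ∀ Kh : ℝ,
      Tendsto (fun α => kappaDE G α h / (1 - α)) (nhdsWithin 1 (Set.Ico (0:ℝ) 1)) (nhds Kh) →
      0 < Kh → Ldi G h ≤ 2 * maxWd G / Kh) ∧
    (∀ κ : ℝ, 0 < κ →
      (∀ h ∈ G.E, ∀ u ∈ h.1, ∀ v ∈ h.2, κ ≤ K u v) →
      diamD G ≤ 2 * maxWd G / κ) := by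
  refine ⟨fun h hE Kh hKh hpos => ?_, fun κ hκ hedge => ?_⟩
  · have hA := G.nonempA h hE
    have hB := G.nonempB h hE
    have hL : 0 < Ldi G h := Ldi_pos hsc hA hB (hor.loopless.disjoint hE)
    have hKh_le : Kh ≤ 2 * maxWd G / Ldi G h :=
      le_of_tendsto_div_one_sub (fun α hα => kappaDE_le hor hsc hA hB
        (fun x hx => ⟨_, (hor h hE).2.1, hx⟩) (fun y hy => ⟨h, hE, hy⟩) hL
        (Set.Ico_subset_Icc_self hα)) hKh
    exact (le_div_comm₀ hpos hL).1 hKh_le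
  · have hbound : 0 ≤ 2 * maxWd G / κ := by have := maxWd_nonneg G; positivity
    refine Real.sSup_le ?_ hbound
    rintro _ ⟨u, v, rfl⟩
    rcases eq_or_ne u v with rfl | huv
    · rwa [ddist_self]
    have hK_le : K u v ≤ 2 * maxWd G / ddist G u v :=
      le_of_tendsto_div_one_sub (fun α hα => kappaDV_le hor hsc huv (Set.Ico_subset_Icc_self hα))
        (hK u v huv)
    exact (le_div_comm₀ hκ (ddist_pos hsc huv)).1 ((le_K hor hsc hK hedge huv).trans hK_le)
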